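/- arXiv:2309.16242 — 4 statements merged into one kernel-verified Lean document; each statement's English description precedes it below -/
import Mathlib

section
/- Let U be a bounded convex open set of ℝ^d (d ≥ 1) and f ∈ H¹(U). Then ∬_{U×U} (f(x) - f(y))² dx dy ≤ 2 m_U C_d (Diam U)² ∫_U |∇f(z)|² dz, where C_d = ln 2 if d = 1 and C_d = (2^{d-1} - 1)/(d-1) if d ≥ 2. -/
/-!
For `x, y ∈ U` the fundamental theorem of calculus along the segment and Jensen's inequality give
`(f x - f y)² ≤ (Diam U)² ∫₀¹ |∇f(x + t (y - x))|² dt`. After integrating over `U × U`, exchanging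
`x` and `y` turns `t` into `1 - t`, so the half `t ∈ (1/2, 1]` carries everything at the price of a
factor `2`. For such `t` and fixed `x`, `y ↦ (1 - t) x + t y` is a homothety of ratio `t` mapping
`U` into `U` by convexity; its Jacobian `t^d` bounds the `y`-integral by `t^{-d} ∫_U |∇f|²`, and
the `x`-integral contributes `m_U`. Finally `∫_{1/2}^1 t^{-d} dt = C_d`.
-/

open MeasureTheory Set Module AffineMap
open scoped ENNReal

noncomputable def Cdim (d : ℕ) : ℝ :=
  if d = 1 then Real.log 2 else ((2 : ℝ) ^ (d - 1) - 1) / ((d : ℝ) - 1)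

theorem integral_inv_pow_half_one_eq_Cdim {d : ℕ} (hd : 1 ≤ d) :
    ∫ t in (1 / 2 : ℝ)..1, (t ^ d)⁻¹ = Cdim d := by
  have h0 : (0 : ℝ) ∉ uIcc (1 / 2) 1 := by
    rw [uIcc_of_le (by norm_num)]; norm_num
  obtain rfl | hd2 := hd.eq_or_lt
  · simp only [pow_one, Cdim, if_pos, integral_inv h0]
    norm_num
  have hexp : -(d : ℤ) + 1 = -((d - 1 : ℕ) : ℤ) := by omega
  simp_rw [← zpow_natCast, ← zpow_neg]
  rw [integral_zpow (Or.inr ⟨by omega, h0⟩), hexp, one_zpow, zpow_neg, zpow_natCast, one_div,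
    inv_pow, inv_inv, Cdim, if_neg hd2.ne']
  push_cast
  rw [← neg_div_neg_eq, neg_sub, neg_add', neg_neg]

theorem Cdim_nonneg {d : ℕ} (hd : 1 ≤ d) : 0 ≤ Cdim d := by
  rw [← integral_inv_pow_half_one_eq_Cdim hd]
  exact intervalIntegral.integral_nonneg (by norm_num) fun t ht ↦ by have := ht.1; positivity

theorem setLIntegral_inv_pow_Ioc_half_one {d : ℕ} (hd : 1 ≤ d) :
    ∫⁻ t in Ioc (1 / 2) 1, ENNReal.ofReal (t ^ d)⁻¹ = ENNReal.ofReal (Cdim d) := by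
  have hcont : ContinuousOn (fun t : ℝ ↦ (t ^ d)⁻¹) (Icc (1 / 2) 1) :=
    (continuousOn_pow d).inv₀ fun t ht ↦ by have := ht.1; positivity
  rw [← ofReal_integral_eq_lintegral_ofReal
    ((hcont.integrableOn_compact isCompact_Icc).mono_set Ioc_subset_Icc_self)
    ((ae_restrict_mem measurableSet_Ioc).mono fun t ht ↦ by have := ht.1; positivity),
    ← intervalIntegral.integral_of_le (by norm_num), integral_inv_pow_half_one_eq_Cdim hd]

theorem setLIntegral_Ioc_zero_one_eq_two_mul_of_symm {g : ℝ → ℝ≥0∞}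
    (hg : ∀ t, g (1 - t) = g t) :
    ∫⁻ t in Ioc (0 : ℝ) 1, g t = 2 * ∫⁻ t in Ioc (1 / 2) 1, g t := by
  have hreflect : ∫⁻ t in Ioc 0 (1 / 2), g t = ∫⁻ t in Ioc (1 / 2) 1, g t := by
    have hpre : (fun s : ℝ ↦ 1 - s) ⁻¹' Ioc 0 (1 / 2) = Ico (1 / 2) 1 := by
      ext s
      simp only [mem_preimage, mem_Ioc, mem_Ico]
      constructor <;> rintro ⟨h₁, h₂⟩ <;> constructor <;> linarith
    rw [← (Measure.measurePreserving_sub_left volume 1).setLIntegral_comp_preimage_emb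
      (Homeomorph.subLeft (1 : ℝ)).measurableEmbedding, hpre]
    simp_rw [hg]
    exact setLIntegral_congr Ico_ae_eq_Ioc
  rw [← Ioc_union_Ioc_eq_Ioc (by norm_num : (0 : ℝ) ≤ 1 / 2) (by norm_num),
    lintegral_union measurableSet_Ioc (Ioc_disjoint_Ioc_of_le le_rfl), hreflect, two_mul]

theorem ofReal_integral_le_lintegral_ofReal {α : Type*} [MeasurableSpace α] {μ : Measure α}
    {f : α → ℝ} (hf : 0 ≤ᵐ[μ] f) :
    ENNReal.ofReal (∫ a, f a ∂μ) ≤ ∫⁻ a, ENNReal.ofReal (f a) ∂μ := by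
  by_cases hfi : Integrable f μ
  · exact (ofReal_integral_eq_lintegral_ofReal hfi hf).le
  · simp [integral_undef hfi]

theorem lintegral_prod_lineMap_one_sub {E : Type*} [AddCommGroup E] [Module ℝ E]
    [MeasurableSpace E] (ν : Measure E) [SFinite ν] (K : E → ℝ≥0∞) (t : ℝ) :
    ∫⁻ p, K (lineMap p.1 p.2 (1 - t)) ∂ν.prod ν = ∫⁻ p, K (lineMap p.1 p.2 t) ∂ν.prod ν := by
  simp_rw [lineMap_apply_one_sub]
  exact lintegral_prod_swap fun p ↦ K (lineMap p.1 p.2 t)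

section NormedSpace

variable {E : Type*} [NormedAddCommGroup E] [NormedSpace ℝ E]

theorem sq_sub_le_sq_norm_mul_integral_sq_norm_fderiv_lineMap {U : Set E} (hUo : IsOpen U)
    (hUc : Convex ℝ U) {f : E → ℝ} (hf : ContDiffOn ℝ 1 f U) {x y : E} (hx : x ∈ U)
    (hy : y ∈ U) :
    (f y - f x) ^ 2 ≤ ‖y - x‖ ^ 2 * ∫ t in Ioc (0 : ℝ) 1, ‖fderiv ℝ f (lineMap x y t)‖ ^ 2 := by
  set B : ℝ → ℝ := fun t ↦ ‖fderiv ℝ f (lineMap x y t)‖ * ‖y - x‖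
  have hseg : MapsTo (lineMap x y) (Icc (0 : ℝ) 1) U := fun t ht ↦ hUc.lineMap_mem hx hy ht
  have hB : ContinuousOn B (Icc 0 1) :=
    (((hf.continuousOn_fderiv_of_isOpen hUo le_rfl).comp (by fun_prop) hseg).norm).mul
      continuousOn_const
  have hBint : IntegrableOn B (Ioc 0 1) :=
    (hB.integrableOn_compact isCompact_Icc).mono_set Ioc_subset_Icc_self
  have hB2int : IntegrableOn (fun t ↦ B t ^ 2) (Ioc 0 1) :=
    ((hB.pow 2).integrableOn_compact isCompact_Icc).mono_set Ioc_subset_Icc_self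
  have hderiv : ∀ t ∈ Icc (0 : ℝ) 1,
      HasDerivAt (fun s ↦ f (lineMap x y s)) (fderiv ℝ f (lineMap x y t) (y - x)) t := fun t ht ↦
    ((hf.differentiableOn one_ne_zero).differentiableAt (hUo.mem_nhds (hseg ht))).hasFDerivAt
      |>.comp_hasDerivAt t hasDerivAt_lineMap
  have hnorm : ‖f y - f x‖ ≤ ∫ t in Ioc (0 : ℝ) 1, B t := by
    rw [← intervalIntegral.integral_of_le zero_le_one]
    simpa using norm_sub_le_integral_of_norm_deriv_le_of_le zero_le_one
      (fun t ht ↦ (hderiv t ht).continuousAt.continuousWithinAt)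
      (fun t ht ↦ (hderiv t (Ioo_subset_Icc_self ht)).differentiableAt.differentiableWithinAt)
      (ae_of_all _ fun t ht ↦
        (hderiv t (Ioo_subset_Icc_self ht)).deriv ▸ ContinuousLinearMap.le_opNorm _ _)
      ((intervalIntegrable_iff_integrableOn_Ioc_of_le zero_le_one).2 hBint)
  have : IsProbabilityMeasure (volume.restrict (Ioc (0 : ℝ) 1)) := ⟨by simp⟩
  calc (f y - f x) ^ 2 = ‖f y - f x‖ ^ 2 := (sq_abs _).symm
    _ ≤ (∫ t in Ioc (0 : ℝ) 1, B t) ^ 2 := by gcongr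
    _ ≤ ∫ t in Ioc (0 : ℝ) 1, B t ^ 2 :=
        (even_two.convexOn_pow).map_integral_le (continuous_pow 2).continuousOn isClosed_univ
          (ae_of_all _ fun _ ↦ mem_univ _) hBint hB2int
    _ = ‖y - x‖ ^ 2 * ∫ t in Ioc (0 : ℝ) 1, ‖fderiv ℝ f (lineMap x y t)‖ ^ 2 := by
        simp_rw [B, mul_pow]
        rw [integral_mul_const, mul_comm]

variable [FiniteDimensional ℝ E] [MeasurableSpace E] [BorelSpace E] (μ : Measure E)
  [μ.IsAddHaarMeasure]

theorem lintegral_comp_smul_of_pos (g : E → ℝ≥0∞) {t : ℝ} (ht : 0 < t) :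
    ∫⁻ y, g (t • y) ∂μ = ENNReal.ofReal (t ^ finrank ℝ E)⁻¹ * ∫⁻ z, g z ∂μ := by
  have h := (Homeomorph.smulOfNeZero t ht.ne').measurableEmbedding.lintegral_map (μ := μ) g
  change ∫⁻ z, g z ∂μ.map (t • ·) = ∫⁻ y, g (t • y) ∂μ at h
  rw [Measure.map_addHaar_smul μ ht.ne', lintegral_smul_measure,
    abs_of_pos (by positivity)] at h
  exact h.symm

theorem setLIntegral_comp_homothety_le {U : Set E} (hU : MeasurableSet U) (K : E → ℝ≥0∞)
    {c : E} {t : ℝ} (ht : 0 < t) (hmaps : ∀ y ∈ U, c + t • y ∈ U) :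
    ∫⁻ y in U, K (c + t • y) ∂μ ≤ ENNReal.ofReal (t ^ finrank ℝ E)⁻¹ * ∫⁻ z in U, K z ∂μ :=
  calc ∫⁻ y in U, K (c + t • y) ∂μ = ∫⁻ y in U, U.indicator K (c + t • y) ∂μ :=
        setLIntegral_congr_fun hU fun y hy ↦ (indicator_of_mem (hmaps y hy) K).symm
    _ ≤ ∫⁻ y, U.indicator K (c + t • y) ∂μ := setLIntegral_le_lintegral _ _
    _ = ENNReal.ofReal (t ^ finrank ℝ E)⁻¹ * ∫⁻ z in U, K z ∂μ := by
        rw [lintegral_comp_smul_of_pos μ (fun z ↦ U.indicator K (c + z)) ht,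
          lintegral_add_left_eq_self, lintegral_indicator hU]

theorem lintegral_prod_lineMap_le {U : Set E} (hU : MeasurableSet U) (hUc : Convex ℝ U)
    (K : E → ℝ≥0∞) {t : ℝ} (ht : t ∈ Ioc 0 1) :
    ∫⁻ p, K (lineMap p.1 p.2 t) ∂(μ.restrict U).prod (μ.restrict U) ≤
      ENNReal.ofReal (t ^ finrank ℝ E)⁻¹ * μ U * ∫⁻ z in U, K z ∂μ :=
  calc ∫⁻ p, K (lineMap p.1 p.2 t) ∂(μ.restrict U).prod (μ.restrict U)
      ≤ ∫⁻ x in U, ∫⁻ y in U, K (lineMap x y t) ∂μ ∂μ := lintegral_prod_le _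
    _ ≤ ∫⁻ _ in U, ENNReal.ofReal (t ^ finrank ℝ E)⁻¹ * ∫⁻ z in U, K z ∂μ ∂μ := by
        refine setLIntegral_mono' hU fun x hx ↦ ?_
        simp_rw [lineMap_apply_module]
        refine setLIntegral_comp_homothety_le μ hU K ht.1 fun y hy ↦ ?_
        simpa only [lineMap_apply_module] using hUc.lineMap_mem hx hy (Ioc_subset_Icc_self ht)
    _ = _ := by rw [setLIntegral_const, mul_right_comm]

theorem setLIntegral_setLIntegral_lineMap_le (hd : 1 ≤ finrank ℝ E) {U : Set E}
    (hU : MeasurableSet U) (hUc : Convex ℝ U) {K : E → ℝ≥0∞} (hK : Measurable K) :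
    ∫⁻ x in U, ∫⁻ y in U, (∫⁻ t in Ioc (0 : ℝ) 1, K (lineMap x y t)) ∂μ ∂μ ≤
      2 * ENNReal.ofReal (Cdim (finrank ℝ E)) * μ U * ∫⁻ z in U, K z ∂μ := by
  set ν := μ.restrict U
  set g : ℝ → ℝ≥0∞ := fun t ↦ ∫⁻ p, K (lineMap p.1 p.2 t) ∂ν.prod ν
  have hmeas : Measurable fun q : (E × E) × ℝ ↦ K (lineMap q.1.1 q.1.2 q.2) :=
    hK.comp (by fun_prop)
  calc ∫⁻ x in U, ∫⁻ y in U, (∫⁻ t in Ioc (0 : ℝ) 1, K (lineMap x y t)) ∂μ ∂μ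
      = ∫⁻ t in Ioc (0 : ℝ) 1, g t := by
        rw [lintegral_lintegral ?_, lintegral_lintegral_swap hmeas.aemeasurable]
        exact (hmeas.lintegral_prod_right' (ν := volume.restrict (Ioc 0 1))).aemeasurable
    _ = 2 * ∫⁻ t in Ioc (1 / 2) 1, g t :=
        setLIntegral_Ioc_zero_one_eq_two_mul_of_symm fun t ↦ lintegral_prod_lineMap_one_sub ν K t
    _ ≤ 2 * ∫⁻ t in Ioc (1 / 2) 1,
          ENNReal.ofReal (t ^ finrank ℝ E)⁻¹ * (μ U * ∫⁻ z in U, K z ∂μ) := by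
        refine mul_le_mul_right (setLIntegral_mono (by fun_prop) fun t ht ↦ ?_) 2
        exact (lintegral_prod_lineMap_le μ hU hUc K (Ioc_subset_Ioc_left (by norm_num) ht)).trans_eq
          (mul_assoc _ _ _)
    _ = _ := by
        rw [lintegral_mul_const _ (by fun_prop), setLIntegral_inv_pow_Ioc_half_one hd]
        ring

theorem setLIntegral_setLIntegral_sq_sub_le (hd : 1 ≤ finrank ℝ E) {U : Set E}
    (hUo : IsOpen U) (hUc : Convex ℝ U) (hUb : Bornology.IsBounded U) {f : E → ℝ}
    (hf : ContDiffOn ℝ 1 f U) :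
    ∫⁻ x in U, ∫⁻ y in U, ENNReal.ofReal ((f x - f y) ^ 2) ∂μ ∂μ ≤
      ENNReal.ofReal (Metric.diam U ^ 2) * (2 * ENNReal.ofReal (Cdim (finrank ℝ E)) * μ U *
        ∫⁻ z in U, ENNReal.ofReal (‖fderiv ℝ f z‖ ^ 2) ∂μ) := by
  set K : E → ℝ≥0∞ := fun z ↦ ENNReal.ofReal (‖fderiv ℝ f z‖ ^ 2)
  have hK : Measurable K := ((measurable_fderiv ℝ f).norm.pow_const 2).ennreal_ofReal
  have hpointwise : ∀ x ∈ U, ∀ y ∈ U, ENNReal.ofReal ((f x - f y) ^ 2) ≤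
      ENNReal.ofReal (Metric.diam U ^ 2) * ∫⁻ t in Ioc (0 : ℝ) 1, K (lineMap x y t) := by
    intro x hx y hy
    have hxy : ‖y - x‖ ≤ Metric.diam U := dist_eq_norm y x ▸ Metric.dist_le_diam_of_mem hUb hy hx
    calc ENNReal.ofReal ((f x - f y) ^ 2) = ENNReal.ofReal ((f y - f x) ^ 2) := by
          rw [← neg_sub, neg_sq]
      _ ≤ ENNReal.ofReal (Metric.diam U ^ 2 *
            ∫ t in Ioc (0 : ℝ) 1, ‖fderiv ℝ f (lineMap x y t)‖ ^ 2) := by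
          refine ENNReal.ofReal_le_ofReal
            ((sq_sub_le_sq_norm_mul_integral_sq_norm_fderiv_lineMap hUo hUc hf hx hy).trans ?_)
          gcongr
      _ ≤ _ := by
          rw [ENNReal.ofReal_mul (sq_nonneg _)]
          gcongr
          exact ofReal_integral_le_lintegral_ofReal (ae_of_all _ fun _ ↦ sq_nonneg _)
  calc ∫⁻ x in U, ∫⁻ y in U, ENNReal.ofReal ((f x - f y) ^ 2) ∂μ ∂μ
      ≤ ∫⁻ x in U, ∫⁻ y in U, (ENNReal.ofReal (Metric.diam U ^ 2) *
          ∫⁻ t in Ioc (0 : ℝ) 1, K (lineMap x y t)) ∂μ ∂μ :=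
        setLIntegral_mono' hUo.measurableSet fun x hx ↦
          setLIntegral_mono' hUo.measurableSet (hpointwise x hx)
    _ = ENNReal.ofReal (Metric.diam U ^ 2) *
          ∫⁻ x in U, ∫⁻ y in U, (∫⁻ t in Ioc (0 : ℝ) 1, K (lineMap x y t)) ∂μ ∂μ := by
        simp_rw [lintegral_const_mul' _ _ ENNReal.ofReal_ne_top]
    _ ≤ _ := by
        gcongr
        exact setLIntegral_setLIntegral_lineMap_le μ hd hUo.measurableSet hUc hK

end NormedSpace

theorem poincare_wirtinger_general {d : ℕ} (hd : 1 ≤ d) (U : Set (EuclideanSpace ℝ (Fin d)))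
    (hUo : IsOpen U) (hUc : Convex ℝ U) (hUb : Bornology.IsBounded U)
    (f : EuclideanSpace ℝ (Fin d) → ℝ) (hf : ContDiffOn ℝ 1 f U)
    (hgrad2 : MemLp (fun z => ‖gradient f z‖) 2 (volume.restrict U)) :
    ∫ x in U, ∫ y in U, (f x - f y) ^ 2 ≤
      2 * (volume U).toReal * Cdim d * Metric.diam U ^ 2 * ∫ z in U, ‖gradient f z‖ ^ 2 := by
  have hgrad : ∀ z, ‖gradient f z‖ = ‖fderiv ℝ f z‖ := fun z ↦
    (InnerProductSpace.toDual ℝ _).symm.norm_map _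
  have key := setLIntegral_setLIntegral_sq_sub_le volume (by simpa using hd) hUo hUc hUb hf
  simp_rw [finrank_euclideanSpace_fin, ← hgrad] at key
  rw [← ofReal_integral_eq_lintegral_ofReal hgrad2.integrable_sq
    (ae_of_all _ fun _ ↦ sq_nonneg _)] at key
  have hLHS : ENNReal.ofReal (∫ x in U, ∫ y in U, (f x - f y) ^ 2) ≤
      ∫⁻ x in U, ∫⁻ y in U, ENNReal.ofReal ((f x - f y) ^ 2) :=
    (ofReal_integral_le_lintegral_ofReal
      (ae_of_all _ fun _ ↦ integral_nonneg fun _ ↦ sq_nonneg _)).trans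
      (lintegral_mono fun _ ↦ ofReal_integral_le_lintegral_ofReal (ae_of_all _ fun _ ↦ sq_nonneg _))
  have hU : volume U ≠ ⊤ := hUb.measure_lt_top.ne
  convert (ENNReal.ofReal_le_iff_le_toReal (by finiteness)).1 (hLHS.trans key) using 1
  simp only [ENNReal.toReal_mul, ENNReal.toReal_ofReal (sq_nonneg _),
    ENNReal.toReal_ofReal (Cdim_nonneg hd), ENNReal.toReal_ofNat,
    ENNReal.toReal_ofReal (integral_nonneg fun _ ↦ sq_nonneg _)]
  ring

/-- Poincaré–Wirtinger inequality on a bounded convex open set `U ⊆ ℝ^d`: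
`∬_{U×U} (f x − f y)² ≤ 2 m_U C_d (Diam U)² ∫_U |∇f|²`. -/
theorem poincare_wirtinger {d : ℕ} (hd : 1 ≤ d) (U : Set (EuclideanSpace ℝ (Fin d)))
    (hUo : IsOpen U) (hUc : Convex ℝ U) (hUb : Bornology.IsBounded U)
    (f : EuclideanSpace ℝ (Fin d) → ℝ) (hf : ContDiffOn ℝ 1 f U)
    (hf2 : MemLp f 2 (volume.restrict U))
    (hgrad2 : MemLp (fun z => ‖gradient f z‖) 2 (volume.restrict U)) :
    ∫ x in U, ∫ y in U, (f x - f y) ^ 2 ≤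
      2 * (volume U).toReal * Cdim d * Metric.diam U ^ 2 * ∫ z in U, ‖gradient f z‖ ^ 2 :=
  poincare_wirtinger_general hd U hUo hUc hUb f hf hgrad2
end

section
/- Discrete entropy dissipation: let (v_K^n, v_{K*}^n, u_{K*}^n) solve the implicit TPFA scheme for the field-road model, and Φ C² convex with Φ(1)=Φ'(1)=0, Φ''>0. Then the discrete entropy H_Φ^n = Σ_K m_K v^∞ Φ(v_K^n/v^∞) + Σ_{K*} m_{K*} u^∞ Φ(u_{K*}^n/u^∞) satisfies (H_Φ^n − H_Φ^{n−1})/δt ≤ −D_Φ^n ≤ 0, where D_Φ^n is the sum over edges of d τ_σ (difference of values)·(difference of Φ' values) for the field and interface edges, D τ_{σ*} analogues on the road, plus μ u^∞ Σ_{K*} m_{K*} (u_{K*}^n/u^∞ − v_{K*}^n/v^∞)(Φ'(u_{K*}^n/u^∞) − Φ'(v_{K*}^n/v^∞)). -/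
/-!
Convexity, `Φ(a) - Φ(b) ≤ Φ'(a) (a - b)`, bounds the entropy increment by the scheme's time
increments tested against `Φ'(v_K/v^∞)` and `Φ'(u_{K*}/u^∞)`. Summation by parts turns the
diffusive fluxes into the edge dissipations, and testing the interface relation against
`Φ'(v_{K*}/v^∞)` turns the field-road exchange into
`μ u^∞ m_{K*} (u_{K*}/u^∞ - v_{K*}/v^∞)(Φ'(u_{K*}/u^∞) - Φ'(v_{K*}/v^∞))`, thanks to
`ν v^∞ = μ u^∞`. Every term of the dissipation is nonnegative because `Φ'` is monotone.
-/

open Finset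

theorem MonotoneOn.sub_mul_sub_nonneg {g : ℝ → ℝ} {s : Set ℝ} (hg : MonotoneOn g s) {a b : ℝ}
    (ha : a ∈ s) (hb : b ∈ s) : 0 ≤ (a - b) * (g a - g b) :=
  mul_comm (g a - g b) (a - b) ▸ (monovaryOn_id_iff.2 hg).sub_mul_sub_nonneg hb ha

theorem MonotoneOn.mul_sub_mul_sub_div_nonneg {g : ℝ → ℝ} (hg : MonotoneOn g (Set.Ici 0))
    {t c x y : ℝ} (ht : 0 ≤ t) (hc : 0 < c) (hx : 0 ≤ x) (hy : 0 ≤ y) :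
    0 ≤ t * (x - y) * (g (x / c) - g (y / c)) := by
  have h := hg.sub_mul_sub_nonneg (Set.mem_Ici.2 (div_nonneg hx hc.le))
    (Set.mem_Ici.2 (div_nonneg hy hc.le))
  have e : t * (x - y) * (g (x / c) - g (y / c)) =
      t * c * ((x / c - y / c) * (g (x / c) - g (y / c))) := by
    field_simp
  rw [e]
  exact mul_nonneg (mul_nonneg ht hc.le) h

theorem ContDiff.convexOn_of_iteratedDeriv_two_nonneg {f : ℝ → ℝ} {D : Set ℝ}
    (hf : ContDiff ℝ 2 f) (hD : Convex ℝ D) (hf'' : ∀ x ∈ D, 0 ≤ iteratedDeriv 2 f x) :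
    ConvexOn ℝ D f := by
  obtain ⟨hdf, -, hf'⟩ := (contDiff_succ_iff_deriv (n := 1)).1 hf
  refine convexOn_of_deriv2_nonneg' hD hdf.differentiableOn
    (hf'.differentiable one_ne_zero).differentiableOn ?_
  simpa only [← iteratedDeriv_eq_iterate] using hf''

theorem ConvexOn.sub_le_deriv_mul_sub {f : ℝ → ℝ} {S : Set ℝ} (hf : ConvexOn ℝ S f) {a b : ℝ}
    (ha : a ∈ S) (hb : b ∈ S) (hfa : DifferentiableAt ℝ f a) :
    f a - f b ≤ deriv f a * (a - b) := by
  rcases lt_trichotomy a b with hab | rfl | hab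
  · have h := hf.deriv_le_slope ha hb hab hfa
    rw [slope_def_field, le_div_iff₀ (sub_pos.2 hab)] at h
    linarith
  · simp
  · have h := hf.slope_le_deriv hb ha hab hfa
    rw [slope_def_field, div_le_iff₀ (sub_pos.2 hab)] at h
    linarith

theorem sum_entropy_sub_le_sum_deriv_mul {α : Type*} (s : Finset α) {Φ : ℝ → ℝ}
    (hΦ : ConvexOn ℝ (Set.Ici 0) Φ) (hdΦ : Differentiable ℝ Φ) {m w w' : α → ℝ} {c : ℝ}
    (hm : ∀ i, 0 ≤ m i) (hc : 0 < c) (hw : ∀ i, 0 ≤ w i) (hw' : ∀ i, 0 ≤ w' i) :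
    ∑ i ∈ s, m i * c * Φ (w i / c) - ∑ i ∈ s, m i * c * Φ (w' i / c) ≤
      ∑ i ∈ s, deriv Φ (w i / c) * (m i * (w i - w' i)) := by
  rw [← sum_sub_distrib]
  refine sum_le_sum fun i _ => ?_
  have h := mul_le_mul_of_nonneg_left
    (hΦ.sub_le_deriv_mul_sub (Set.mem_Ici.2 (div_nonneg (hw i) hc.le))
      (Set.mem_Ici.2 (div_nonneg (hw' i) hc.le)) (hdΦ _)) (mul_nonneg (hm i) hc.le)
  have e : m i * c * (deriv Φ (w i / c) * (w i / c - w' i / c)) =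
      deriv Φ (w i / c) * (m i * (w i - w' i)) := by
    field_simp
  linarith

/-- Net two-point flux of `w` out of the cell `K` through the edges `E`; an edge
`σ = (K, L)` is listed once and contributes to both of its cells. -/
def tpfaFlux {α : Type*} [DecidableEq α] (E : Finset (α × α)) (τ : α × α → ℝ) (w : α → ℝ)
    (K : α) : ℝ :=
  ∑ σ ∈ E, ((if σ.1 = K then τ σ * (w K - w σ.2) else 0) +
    (if σ.2 = K then τ σ * (w K - w σ.1) else 0))

section Tpfa
variable {α : Type*} [Fintype α] [DecidableEq α]

theorem sum_mul_tpfaFlux (E : Finset (α × α)) (τ : α × α → ℝ) (w g : α → ℝ) :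
    ∑ K, g K * tpfaFlux E τ w K = ∑ σ ∈ E, τ σ * (w σ.1 - w σ.2) * (g σ.1 - g σ.2) := by
  simp only [tpfaFlux, mul_sum]
  rw [sum_comm]
  refine sum_congr rfl fun σ _ => ?_
  simp only [mul_add, mul_ite, mul_zero, sum_add_distrib, sum_ite_eq, mem_univ, if_true]
  ring

theorem sum_mul_increment_eq_of_tpfa {E : Finset (α × α)} {τ : α × α → ℝ}
    {m w wprev s : α → ℝ} {c δt : ℝ} (hδt : δt ≠ 0)
    (h : ∀ K, m K * (w K - wprev K) / δt + c * tpfaFlux E τ w K + s K = 0) (g : α → ℝ) :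
    ∑ K, g K * (m K * (w K - wprev K)) =
      -δt * (c * ∑ σ ∈ E, τ σ * (w σ.1 - w σ.2) * (g σ.1 - g σ.2) + ∑ K, g K * s K) := by
  have hK : ∀ K, m K * (w K - wprev K) = -δt * (c * tpfaFlux E τ w K + s K) := by
    intro K
    have := h K
    field_simp at this
    linarith
  rw [← sum_mul_tpfaFlux, mul_sum, ← sum_add_distrib, mul_sum]
  exact sum_congr rfl fun K _ => by rw [hK K]; ring

end Tpfa

theorem sum_mul_sum_ite_eq {ι κ : Type*} [Fintype ι] [Fintype κ] [DecidableEq ι] (nb : κ → ι)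
    (f : κ → ι → ℝ) (g : ι → ℝ) :
    ∑ K, g K * ∑ j, (if nb j = K then f j K else 0) = ∑ j, g (nb j) * f j (nb j) := by
  simp only [mul_sum, mul_ite, mul_zero]
  rw [sum_comm]
  simp only [sum_ite_eq, mem_univ, if_true]

section FieldRoad
variable {ι κ : Type*} [Fintype ι] [Fintype κ] [DecidableEq ι] [DecidableEq κ]
  {EΩ : Finset (ι × ι)} {Eω : Finset (κ × κ)} {nb : κ → ι} {mK : ι → ℝ} {mKs : κ → ℝ}
  {τ : ι × ι → ℝ} {τr : κ → ℝ} {τs : κ × κ → ℝ} {dc Dc μ ν δt vinf uinf : ℝ}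
  {vprev : ι → ℝ} {uprev : κ → ℝ} {v : ι → ℝ} {vI : κ → ℝ} {u : κ → ℝ}

theorem fieldRoad_weak_form (hδt : δt ≠ 0) (hvinf : vinf ≠ 0) (huinf : uinf ≠ 0)
    (hsteady : ν * vinf = μ * uinf)
    (hv : ∀ K, mK K * (v K - vprev K) / δt + dc * tpfaFlux EΩ τ v K
        + dc * (∑ Ks, if nb Ks = K then τr Ks * (v K - vI Ks) else 0) = 0)
    (hI : ∀ Ks, -dc * (τr Ks * (v (nb Ks) - vI Ks)) = mKs Ks * (μ * u Ks - ν * vI Ks))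
    (hu : ∀ Ks, mKs Ks * (u Ks - uprev Ks) / δt + Dc * tpfaFlux Eω τs u Ks
        + mKs Ks * (μ * u Ks - ν * vI Ks) = 0)
    (p : ι → ℝ) (q r : κ → ℝ) :
    (∑ K, p K * (mK K * (v K - vprev K))) + ∑ Ks, q Ks * (mKs Ks * (u Ks - uprev Ks)) =
      -δt * (dc * (∑ Ks, τr Ks * (v (nb Ks) - vI Ks) * (p (nb Ks) - r Ks))
        + dc * (∑ σ ∈ EΩ, τ σ * (v σ.1 - v σ.2) * (p σ.1 - p σ.2))
        + Dc * (∑ σ ∈ Eω, τs σ * (u σ.1 - u σ.2) * (q σ.1 - q σ.2))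
        + μ * uinf * (∑ Ks, mKs Ks * (u Ks / uinf - vI Ks / vinf) * (q Ks - r Ks))) := by
  have hexchange : ∀ Ks, dc * (p (nb Ks) * (τr Ks * (v (nb Ks) - vI Ks)))
      + q Ks * (mKs Ks * (μ * u Ks - ν * vI Ks)) =
      dc * (τr Ks * (v (nb Ks) - vI Ks) * (p (nb Ks) - r Ks))
      + μ * uinf * (mKs Ks * (u Ks / uinf - vI Ks / vinf) * (q Ks - r Ks)) := by
    intro Ks
    have hreaction : μ * uinf * (u Ks / uinf - vI Ks / vinf) = μ * u Ks - ν * vI Ks := by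
      field_simp
      linear_combination vI Ks * hsteady
    linear_combination (-r Ks) * hI Ks - (mKs Ks * (q Ks - r Ks)) * hreaction
  have hfield : ∑ K, p K * (dc * ∑ Ks, if nb Ks = K then τr Ks * (v K - vI Ks) else 0) =
      dc * ∑ Ks, p (nb Ks) * (τr Ks * (v (nb Ks) - vI Ks)) := by
    rw [← sum_mul_sum_ite_eq nb (fun Ks K => τr Ks * (v K - vI Ks)) p, mul_sum]
    exact sum_congr rfl fun K _ => mul_left_comm _ _ _
  have hsum := sum_congr rfl fun Ks (_ : Ks ∈ univ) => hexchange Ks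
  simp only [sum_add_distrib, ← mul_sum] at hsum
  rw [sum_mul_increment_eq_of_tpfa hδt hv, sum_mul_increment_eq_of_tpfa hδt hu, hfield]
  linear_combination (-δt) * hsum

end FieldRoad

/-- Field cells are indexed by `ι`, road cells by `κ`. Each road cell `K*` is also the interface
edge `K|K*` with field neighbour `nb K*`, and `vI K*` is the field value `v_{K*}` on it. -/
theorem discrete_entropy_dissipation_general
    {ι κ : Type*} [Fintype ι] [Fintype κ] [DecidableEq ι] [DecidableEq κ]
    (EΩ : Finset (ι × ι)) (Eω : Finset (κ × κ)) (nb : κ → ι)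
    (mK : ι → ℝ) (mKs : κ → ℝ) (τ : ι × ι → ℝ) (τr : κ → ℝ) (τs : κ × κ → ℝ)
    (dc Dc μ ν δt vinf uinf : ℝ)
    (hmK : ∀ K, 0 < mK K) (hmKs : ∀ Ks, 0 < mKs Ks)
    (hτ : ∀ σ ∈ EΩ, 0 < τ σ) (hτr : ∀ Ks, 0 < τr Ks) (hτs : ∀ σ ∈ Eω, 0 < τs σ)
    (hdc : 0 < dc) (hDc : 0 < Dc) (hμ : 0 < μ) (hδt : 0 < δt)
    (hvinf : 0 < vinf) (huinf : 0 < uinf) (hsteady : ν * vinf = μ * uinf)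
    (vprev : ι → ℝ) (uprev : κ → ℝ) (v : ι → ℝ) (vI : κ → ℝ) (u : κ → ℝ)
    (hvprev : ∀ K, 0 ≤ vprev K) (huprev : ∀ Ks, 0 ≤ uprev Ks)
    (hvpos : ∀ K, 0 ≤ v K) (hvIpos : ∀ Ks, 0 ≤ vI Ks) (hupos : ∀ Ks, 0 ≤ u Ks)
    (hschemev : ∀ K : ι,
      mK K * (v K - vprev K) / δt
        + dc * (∑ σ ∈ EΩ, ((if σ.1 = K then τ σ * (v K - v σ.2) else 0) +
            (if σ.2 = K then τ σ * (v K - v σ.1) else 0)))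
        + dc * (∑ Ks : κ, if nb Ks = K then τr Ks * (v K - vI Ks) else 0) = 0)
    (hschemeI : ∀ Ks : κ,
      -dc * (τr Ks * (v (nb Ks) - vI Ks)) = mKs Ks * (μ * u Ks - ν * vI Ks))
    (hschemeu : ∀ Ks : κ,
      mKs Ks * (u Ks - uprev Ks) / δt
        + Dc * (∑ σ ∈ Eω, ((if σ.1 = Ks then τs σ * (u Ks - u σ.2) else 0) +
            (if σ.2 = Ks then τs σ * (u Ks - u σ.1) else 0)))
        + mKs Ks * (μ * u Ks - ν * vI Ks) = 0)
    (Φ : ℝ → ℝ) (hΦ : ContDiff ℝ 2 Φ)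
    (hΦ'' : ∀ s, 0 ≤ s → 0 < iteratedDeriv 2 Φ s) :
    (let Hn := (∑ K : ι, mK K * vinf * Φ (v K / vinf)) +
        ∑ Ks : κ, mKs Ks * uinf * Φ (u Ks / uinf)
     let Hprev := (∑ K : ι, mK K * vinf * Φ (vprev K / vinf)) +
        ∑ Ks : κ, mKs Ks * uinf * Φ (uprev Ks / uinf)
     let Dn := dc * (∑ Ks : κ, τr Ks * (v (nb Ks) - vI Ks) *
          (deriv Φ (v (nb Ks) / vinf) - deriv Φ (vI Ks / vinf)))
        + dc * (∑ σ ∈ EΩ, τ σ * (v σ.1 - v σ.2) *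
          (deriv Φ (v σ.1 / vinf) - deriv Φ (v σ.2 / vinf)))
        + Dc * (∑ σ ∈ Eω, τs σ * (u σ.1 - u σ.2) *
          (deriv Φ (u σ.1 / uinf) - deriv Φ (u σ.2 / uinf)))
        + μ * uinf * (∑ Ks : κ, mKs Ks * (u Ks / uinf - vI Ks / vinf) *
          (deriv Φ (u Ks / uinf) - deriv Φ (vI Ks / vinf)))
     (Hn - Hprev) / δt ≤ -Dn ∧ 0 ≤ Dn) := by
  intro Hn Hprev Dn
  have hconv : ConvexOn ℝ (Set.Ici 0) Φ :=
    hΦ.convexOn_of_iteratedDeriv_two_nonneg (convex_Ici 0) fun s hs => (hΦ'' s hs).le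
  have hdΦ : Differentiable ℝ Φ := hΦ.differentiable two_ne_zero
  have hmono : MonotoneOn (deriv Φ) (Set.Ici 0) := hconv.monotoneOn_deriv fun s _ => hdΦ s
  have hentropy : Hn - Hprev ≤ (∑ K, deriv Φ (v K / vinf) * (mK K * (v K - vprev K)))
      + ∑ Ks, deriv Φ (u Ks / uinf) * (mKs Ks * (u Ks - uprev Ks)) := by
    have := add_le_add
      (sum_entropy_sub_le_sum_deriv_mul univ hconv hdΦ (fun K => (hmK K).le) hvinf hvpos hvprev)
      (sum_entropy_sub_le_sum_deriv_mul univ hconv hdΦ (fun Ks => (hmKs Ks).le) huinf hupos huprev)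
    linarith
  have hbalance : (∑ K, deriv Φ (v K / vinf) * (mK K * (v K - vprev K)))
      + ∑ Ks, deriv Φ (u Ks / uinf) * (mKs Ks * (u Ks - uprev Ks)) = -δt * Dn :=
    fieldRoad_weak_form hδt.ne' hvinf.ne' huinf.ne' hsteady hschemev hschemeI hschemeu _ _
      fun Ks => deriv Φ (vI Ks / vinf)
  have hDn : 0 ≤ Dn := by
    refine add_nonneg (add_nonneg (add_nonneg ?_ ?_) ?_) ?_
    · exact mul_nonneg hdc.le <| sum_nonneg fun Ks _ =>
        hmono.mul_sub_mul_sub_div_nonneg (hτr Ks).le hvinf (hvpos _) (hvIpos Ks)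
    · exact mul_nonneg hdc.le <| sum_nonneg fun σ hσ =>
        hmono.mul_sub_mul_sub_div_nonneg (hτ σ hσ).le hvinf (hvpos _) (hvpos _)
    · exact mul_nonneg hDc.le <| sum_nonneg fun σ hσ =>
        hmono.mul_sub_mul_sub_div_nonneg (hτs σ hσ).le huinf (hupos _) (hupos _)
    · refine mul_nonneg (mul_nonneg hμ.le huinf.le) <| sum_nonneg fun Ks _ => ?_
      rw [mul_assoc]
      exact mul_nonneg (hmKs Ks).le <| hmono.sub_mul_sub_nonneg
        (Set.mem_Ici.2 (div_nonneg (hupos Ks) huinf.le))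
        (Set.mem_Ici.2 (div_nonneg (hvIpos Ks) hvinf.le))
  refine ⟨?_, hDn⟩
  rw [div_le_iff₀ hδt]
  linarith

/-- Discrete entropy dissipation for the implicit TPFA finite volume scheme for the
field-road model. Field cells are indexed by `ι`, road cells by `κ`; `EΩ` is the set of
interior field edges `σ = K|L`, each road cell `K*` is an interface edge `σ = K|K*` with
field neighbour `nb K*`, and `Eω` is the set of road edges `σ* = K*|L*`. For a convex
entropy density `Φ` with `Φ(1) = Φ'(1) = 0` and `Φ'' > 0` on `[0,∞)`, the discrete
relative entropy decreases at rate at least the (nonnegative) discrete dissipation. -/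
theorem discrete_entropy_dissipation
    {ι κ : Type*} [Fintype ι] [Fintype κ] [DecidableEq ι] [DecidableEq κ]
    (EΩ : Finset (ι × ι)) (Eω : Finset (κ × κ)) (nb : κ → ι)
    (mK : ι → ℝ) (mKs : κ → ℝ) (τ : ι × ι → ℝ) (τr : κ → ℝ) (τs : κ × κ → ℝ)
    (dc Dc μ ν δt vinf uinf : ℝ)
    (hmK : ∀ K, 0 < mK K) (hmKs : ∀ Ks, 0 < mKs Ks)
    (hτ : ∀ σ ∈ EΩ, 0 < τ σ) (hτr : ∀ Ks, 0 < τr Ks) (hτs : ∀ σ ∈ Eω, 0 < τs σ)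
    (hdc : 0 < dc) (hDc : 0 < Dc) (hμ : 0 < μ) (hν : 0 < ν) (hδt : 0 < δt)
    (hvinf : 0 < vinf) (huinf : 0 < uinf) (hsteady : ν * vinf = μ * uinf)
    (vprev : ι → ℝ) (uprev : κ → ℝ) (v : ι → ℝ) (vI : κ → ℝ) (u : κ → ℝ)
    (hvprev : ∀ K, 0 ≤ vprev K) (huprev : ∀ Ks, 0 ≤ uprev Ks)
    (hvpos : ∀ K, 0 ≤ v K) (hvIpos : ∀ Ks, 0 ≤ vI Ks) (hupos : ∀ Ks, 0 ≤ u Ks)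
    (hschemev : ∀ K : ι,
      mK K * (v K - vprev K) / δt
        + dc * (∑ σ ∈ EΩ, ((if σ.1 = K then τ σ * (v K - v σ.2) else 0) +
            (if σ.2 = K then τ σ * (v K - v σ.1) else 0)))
        + dc * (∑ Ks : κ, if nb Ks = K then τr Ks * (v K - vI Ks) else 0) = 0)
    (hschemeI : ∀ Ks : κ,
      -dc * (τr Ks * (v (nb Ks) - vI Ks)) = mKs Ks * (μ * u Ks - ν * vI Ks))
    (hschemeu : ∀ Ks : κ,
      mKs Ks * (u Ks - uprev Ks) / δt
        + Dc * (∑ σ ∈ Eω, ((if σ.1 = Ks then τs σ * (u Ks - u σ.2) else 0) +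
            (if σ.2 = Ks then τs σ * (u Ks - u σ.1) else 0)))
        + mKs Ks * (μ * u Ks - ν * vI Ks) = 0)
    (Φ : ℝ → ℝ) (hΦ : ContDiff ℝ 2 Φ) (hΦ1 : Φ 1 = 0) (hΦ'1 : deriv Φ 1 = 0)
    (hΦ'' : ∀ s, 0 ≤ s → 0 < iteratedDeriv 2 Φ s) (hΦ0 : ∀ s, 0 ≤ s → 0 ≤ Φ s) :
    (let Hn := (∑ K : ι, mK K * vinf * Φ (v K / vinf)) +
        ∑ Ks : κ, mKs Ks * uinf * Φ (u Ks / uinf)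
     let Hprev := (∑ K : ι, mK K * vinf * Φ (vprev K / vinf)) +
        ∑ Ks : κ, mKs Ks * uinf * Φ (uprev Ks / uinf)
     let Dn := dc * (∑ Ks : κ, τr Ks * (v (nb Ks) - vI Ks) *
          (deriv Φ (v (nb Ks) / vinf) - deriv Φ (vI Ks / vinf)))
        + dc * (∑ σ ∈ EΩ, τ σ * (v σ.1 - v σ.2) *
          (deriv Φ (v σ.1 / vinf) - deriv Φ (v σ.2 / vinf)))
        + Dc * (∑ σ ∈ Eω, τs σ * (u σ.1 - u σ.2) *
          (deriv Φ (u σ.1 / uinf) - deriv Φ (u σ.2 / uinf)))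
        + μ * uinf * (∑ Ks : κ, mKs Ks * (u Ks / uinf - vI Ks / vinf) *
          (deriv Φ (u Ks / uinf) - deriv Φ (vI Ks / vinf)))
     (Hn - Hprev) / δt ≤ -Dn ∧ 0 ≤ Dn) :=
  discrete_entropy_dissipation_general EΩ Eω nb mK mKs τ τr τs dc Dc μ ν δt vinf uinf hmK hmKs hτ
    hτr hτs hdc hDc hμ hδt hvinf huinf hsteady vprev uprev v vI u hvprev huprev hvpos hvIpos hupos
    hschemev hschemeI hschemeu Φ hΦ hΦ''
end

section
/- Mass conservation of the TPFA scheme: any solution of the implicit finite volume scheme for the field-road model satisfies Σ_{K∈T_Ω} m_K v_K^n + Σ_{K*∈T_ω} m_{K*} u_{K*}^n = M₀ for all n ≥ 0, where M₀ is the discrete initial mass. -/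
open Finset

lemma flux_zero {α : Type*} [Fintype α] [DecidableEq α] (E : Finset (α × α))
    (τ : α × α → ℝ) (w : α → ℝ) :
    ∑ K : α, ∑ σ ∈ E, ((if σ.1 = K then τ σ * (w K - w σ.2) else 0) +
      (if σ.2 = K then τ σ * (w K - w σ.1) else 0)) = 0 := by
  rw [Finset.sum_comm]
  refine Finset.sum_eq_zero fun σ _ => ?_
  rw [Finset.sum_add_distrib]
  have h1 : ∑ K : α, (if σ.1 = K then τ σ * (w K - w σ.2) else 0)
      = τ σ * (w σ.1 - w σ.2) := by
    rw [Finset.sum_ite_eq]; simp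
  have h2 : ∑ K : α, (if σ.2 = K then τ σ * (w K - w σ.1) else 0)
      = τ σ * (w σ.2 - w σ.1) := by
    rw [Finset.sum_ite_eq]; simp
  rw [h1, h2]; ring

lemma interface_sum {ι κ : Type*} [Fintype ι] [Fintype κ] [DecidableEq ι]
    (nb : κ → ι) (g : κ → ι → ℝ) :
    ∑ K : ι, ∑ Ks : κ, (if nb Ks = K then g Ks K else 0) = ∑ Ks : κ, g Ks (nb Ks) := by
  rw [Finset.sum_comm]
  refine Finset.sum_congr rfl fun Ks _ => ?_
  rw [Finset.sum_ite_eq]; simp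

/-- Mass conservation of the implicit TPFA finite volume scheme for the field-road model:
any solution satisfies `Σ_K m_K v_K^n + Σ_{K*} m_{K*} u_{K*}^n = M₀` for all `n ≥ 0`,
where `M₀` is the discrete initial mass. -/
theorem discrete_mass_conservation
    {ι κ : Type*} [Fintype ι] [Fintype κ] [DecidableEq ι] [DecidableEq κ]
    (EΩ : Finset (ι × ι)) (Eω : Finset (κ × κ)) (nb : κ → ι)
    (mK : ι → ℝ) (mKs : κ → ℝ) (τ : ι × ι → ℝ) (τr : κ → ℝ) (τs : κ × κ → ℝ)
    (dc Dc μ ν δt : ℝ)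
    (hmK : ∀ K, 0 < mK K) (hmKs : ∀ Ks, 0 < mKs Ks)
    (hτ : ∀ σ ∈ EΩ, 0 < τ σ) (hτr : ∀ Ks, 0 < τr Ks) (hτs : ∀ σ ∈ Eω, 0 < τs σ)
    (hdc : 0 < dc) (hDc : 0 < Dc) (hμ : 0 < μ) (hν : 0 < ν) (hδt : 0 < δt)
    (v : ℕ → ι → ℝ) (vI : ℕ → κ → ℝ) (u : ℕ → κ → ℝ)
    (hschemev : ∀ n : ℕ, 1 ≤ n → ∀ K : ι,
      mK K * (v n K - v (n - 1) K) / δt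
        + dc * (∑ σ ∈ EΩ, ((if σ.1 = K then τ σ * (v n K - v n σ.2) else 0) +
            (if σ.2 = K then τ σ * (v n K - v n σ.1) else 0)))
        + dc * (∑ Ks : κ, if nb Ks = K then τr Ks * (v n K - vI n Ks) else 0) = 0)
    (hschemeI : ∀ n : ℕ, 1 ≤ n → ∀ Ks : κ,
      -dc * (τr Ks * (v n (nb Ks) - vI n Ks)) = mKs Ks * (μ * u n Ks - ν * vI n Ks))
    (hschemeu : ∀ n : ℕ, 1 ≤ n → ∀ Ks : κ,
      mKs Ks * (u n Ks - u (n - 1) Ks) / δt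
        + Dc * (∑ σ ∈ Eω, ((if σ.1 = Ks then τs σ * (u n Ks - u n σ.2) else 0) +
            (if σ.2 = Ks then τs σ * (u n Ks - u n σ.1) else 0)))
        + mKs Ks * (μ * u n Ks - ν * vI n Ks) = 0) :
    ∀ n : ℕ, (∑ K : ι, mK K * v n K) + ∑ Ks : κ, mKs Ks * u n Ks =
      (∑ K : ι, mK K * v 0 K) + ∑ Ks : κ, mKs Ks * u 0 Ks := by
  intro n
  induction n with
  | zero => rfl
  | succ n ih =>
    -- abbreviations
    set A := ∑ K : ι, mK K * v (n + 1) K with hA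
    set A' := ∑ K : ι, mK K * v n K with hA'
    set B := ∑ Ks : κ, mKs Ks * u (n + 1) Ks with hB
    set B' := ∑ Ks : κ, mKs Ks * u n Ks with hB'
    set C := ∑ Ks : κ, mKs Ks * (μ * u (n + 1) Ks - ν * vI (n + 1) Ks) with hC
    -- sum of the v-equations
    have hsv : ∑ K : ι, (mK K * (v (n + 1) K - v n K) / δt
        + dc * (∑ σ ∈ EΩ, ((if σ.1 = K then τ σ * (v (n + 1) K - v (n + 1) σ.2) else 0) +
            (if σ.2 = K then τ σ * (v (n + 1) K - v (n + 1) σ.1) else 0)))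
        + dc * (∑ Ks : κ, if nb Ks = K then τr Ks * (v (n + 1) K - vI (n + 1) Ks) else 0))
        = 0 := by
      refine Finset.sum_eq_zero fun K _ => ?_
      have h := hschemev (n + 1) (by omega) K
      simpa using h
    rw [Finset.sum_add_distrib, Finset.sum_add_distrib, ← Finset.mul_sum, ← Finset.mul_sum,
      flux_zero EΩ τ (v (n + 1))] at hsv
    have hint : ∑ K : ι, ∑ Ks : κ,
        (if nb Ks = K then τr Ks * (v (n + 1) K - vI (n + 1) Ks) else 0)
        = ∑ Ks : κ, τr Ks * (v (n + 1) (nb Ks) - vI (n + 1) Ks) := by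
      simpa using interface_sum nb (fun Ks K => τr Ks * (v (n + 1) K - vI (n + 1) Ks))
    rw [hint, mul_zero, add_zero] at hsv
    -- translate the interface flux using the interface equation
    have h2 : dc * ∑ Ks : κ, τr Ks * (v (n + 1) (nb Ks) - vI (n + 1) Ks) = -C := by
      rw [Finset.mul_sum, hC, ← Finset.sum_neg_distrib]
      refine Finset.sum_congr rfl fun Ks _ => ?_
      have h := hschemeI (n + 1) (by omega) Ks
      linarith
    -- sum of the u-equations
    have hsu : ∑ Ks : κ, (mKs Ks * (u (n + 1) Ks - u n Ks) / δt
        + Dc * (∑ σ ∈ Eω, ((if σ.1 = Ks then τs σ * (u (n + 1) Ks - u (n + 1) σ.2) else 0) +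
            (if σ.2 = Ks then τs σ * (u (n + 1) Ks - u (n + 1) σ.1) else 0)))
        + mKs Ks * (μ * u (n + 1) Ks - ν * vI (n + 1) Ks)) = 0 := by
      refine Finset.sum_eq_zero fun Ks _ => ?_
      have h := hschemeu (n + 1) (by omega) Ks
      simpa using h
    rw [Finset.sum_add_distrib, Finset.sum_add_distrib, ← Finset.mul_sum,
      flux_zero Eω τs (u (n + 1)), mul_zero, add_zero, ← hC] at hsu
    -- rewrite the time-difference sums
    have hdv : ∑ K : ι, mK K * (v (n + 1) K - v n K) / δt = (A - A') / δt := by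
      rw [hA, hA', ← Finset.sum_sub_distrib, Finset.sum_div]
      exact Finset.sum_congr rfl fun K _ => by ring
    have hdu : ∑ Ks : κ, mKs Ks * (u (n + 1) Ks - u n Ks) / δt = (B - B') / δt := by
      rw [hB, hB', ← Finset.sum_sub_distrib, Finset.sum_div]
      exact Finset.sum_congr rfl fun Ks _ => by ring
    rw [hdv, h2] at hsv
    rw [hdu] at hsu
    -- conclude
    have hz : (A - A' + (B - B')) / δt = 0 := by
      rw [add_div]; linarith
    have := (div_eq_zero_iff.mp hz).resolve_right (ne_of_gt hδt)
    have hmass : A + B = A' + B' := by linarith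
    rw [hmass]; exact ih
end

section
/- Uniqueness/kernel triviality for the discrete scheme: suppose (v_K)_{K∈T_Ω}, (v_{K*})_{K*∈T_ω}, (u_{K*})_{K*∈T_ω} satisfy, for the homogeneous implicit TPFA scheme (i.e. with previous-step data zero), the weak identity obtained by testing with φ_K = ν v_K, φ_{K*} = ν v_{K*}, ψ_{K*} = μ u_{K*}; then Σ_K (m_K/δt)ν v_K² + Σ_{K*}(m_{K*}/δt)μ u_{K*}² + dν Σ_{σ=K|L}τ_σ(v_K−v_L)² + dν Σ_{σ=K|K*}τ_σ(v_K−v_{K*})² + Dμ Σ_{σ*}τ_{σ*}(u_{K*}−u_{L*})² + Σ_{K*} m_{K*}(μu_{K*}−νv_{K*})² = 0, hence all v_K, v_{K*}, u_{K*} vanish. -/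
open Finset

private lemma edge_sum_aux {α : Type*} [Fintype α] [DecidableEq α]
    (E : Finset (α × α)) (τ : α × α → ℝ) (w : α → ℝ) :
    ∑ K : α, w K * (∑ σ ∈ E, ((if σ.1 = K then τ σ * (w K - w σ.2) else 0) +
        (if σ.2 = K then τ σ * (w K - w σ.1) else 0)))
      = ∑ σ ∈ E, τ σ * (w σ.1 - w σ.2) ^ 2 := by
  simp only [Finset.mul_sum]
  rw [Finset.sum_comm]
  refine Finset.sum_congr rfl fun σ _ => ?_
  simp only [mul_add, mul_ite, mul_zero, Finset.sum_add_distrib, Finset.sum_ite_eq,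
    Finset.mem_univ, if_true]
  ring

private lemma road_sum_aux {α β : Type*} [Fintype α] [Fintype β] [DecidableEq α]
    (nb : β → α) (g : α → β → ℝ) (w : α → ℝ) :
    ∑ K : α, w K * (∑ Ks : β, if nb Ks = K then g K Ks else 0)
      = ∑ Ks : β, w (nb Ks) * g (nb Ks) Ks := by
  simp only [Finset.mul_sum]
  rw [Finset.sum_comm]
  refine Finset.sum_congr rfl fun Ks _ => ?_
  simp only [mul_ite, mul_zero, Finset.sum_ite_eq, Finset.mem_univ, if_true]

/-- Kernel triviality for the implicit TPFA scheme for the field-road model: if the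
discrete unknowns satisfy the homogeneous scheme (previous-step data zero), then, testing
with `φ_K = ν v_K`, `φ_{K*} = ν v_{K*}`, `ψ_{K*} = μ u_{K*}`, the resulting sum of
nonnegative quadratic terms vanishes, and hence all unknowns vanish. -/
theorem discrete_scheme_kernel_trivial
    {ι κ : Type*} [Fintype ι] [Fintype κ] [DecidableEq ι] [DecidableEq κ]
    (EΩ : Finset (ι × ι)) (Eω : Finset (κ × κ)) (nb : κ → ι)
    (mK : ι → ℝ) (mKs : κ → ℝ) (τ : ι × ι → ℝ) (τr : κ → ℝ) (τs : κ × κ → ℝ)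
    (dc Dc μ ν δt : ℝ)
    (hmK : ∀ K, 0 < mK K) (hmKs : ∀ Ks, 0 < mKs Ks)
    (hτ : ∀ σ ∈ EΩ, 0 < τ σ) (hτr : ∀ Ks, 0 < τr Ks) (hτs : ∀ σ ∈ Eω, 0 < τs σ)
    (hdc : 0 < dc) (hDc : 0 < Dc) (hμ : 0 < μ) (hν : 0 < ν) (hδt : 0 < δt)
    (v : ι → ℝ) (vI : κ → ℝ) (u : κ → ℝ)
    (hschemev : ∀ K : ι,
      mK K * (v K - 0) / δt
        + dc * (∑ σ ∈ EΩ, ((if σ.1 = K then τ σ * (v K - v σ.2) else 0) +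
            (if σ.2 = K then τ σ * (v K - v σ.1) else 0)))
        + dc * (∑ Ks : κ, if nb Ks = K then τr Ks * (v K - vI Ks) else 0) = 0)
    (hschemeI : ∀ Ks : κ,
      -dc * (τr Ks * (v (nb Ks) - vI Ks)) = mKs Ks * (μ * u Ks - ν * vI Ks))
    (hschemeu : ∀ Ks : κ,
      mKs Ks * (u Ks - 0) / δt
        + Dc * (∑ σ ∈ Eω, ((if σ.1 = Ks then τs σ * (u Ks - u σ.2) else 0) +
            (if σ.2 = Ks then τs σ * (u Ks - u σ.1) else 0)))
        + mKs Ks * (μ * u Ks - ν * vI Ks) = 0) :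
    ((∑ K : ι, (mK K / δt) * ν * v K ^ 2) + (∑ Ks : κ, (mKs Ks / δt) * μ * u Ks ^ 2)
      + dc * ν * (∑ σ ∈ EΩ, τ σ * (v σ.1 - v σ.2) ^ 2)
      + dc * ν * (∑ Ks : κ, τr Ks * (v (nb Ks) - vI Ks) ^ 2)
      + Dc * μ * (∑ σ ∈ Eω, τs σ * (u σ.1 - u σ.2) ^ 2)
      + (∑ Ks : κ, mKs Ks * (μ * u Ks - ν * vI Ks) ^ 2) = 0) ∧
    (∀ K, v K = 0) ∧ (∀ Ks, vI Ks = 0) ∧ (∀ Ks, u Ks = 0) := by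
  -- Step 1: the three tested identities sum to zero.
  have hA : ∑ K : ι, ν * v K *
      (mK K * (v K - 0) / δt
        + dc * (∑ σ ∈ EΩ, ((if σ.1 = K then τ σ * (v K - v σ.2) else 0) +
            (if σ.2 = K then τ σ * (v K - v σ.1) else 0)))
        + dc * (∑ Ks : κ, if nb Ks = K then τr Ks * (v K - vI Ks) else 0)) = 0 :=
    Finset.sum_eq_zero fun K _ => by rw [hschemev K, mul_zero]
  have hB : ∑ Ks : κ, μ * u Ks *
      (mKs Ks * (u Ks - 0) / δt
        + Dc * (∑ σ ∈ Eω, ((if σ.1 = Ks then τs σ * (u Ks - u σ.2) else 0) +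
            (if σ.2 = Ks then τs σ * (u Ks - u σ.1) else 0)))
        + mKs Ks * (μ * u Ks - ν * vI Ks)) = 0 :=
    Finset.sum_eq_zero fun Ks _ => by rw [hschemeu Ks, mul_zero]
  have hC : ∑ Ks : κ, ν * vI Ks *
      (-dc * (τr Ks * (v (nb Ks) - vI Ks)) - mKs Ks * (μ * u Ks - ν * vI Ks)) = 0 :=
    Finset.sum_eq_zero fun Ks _ => by rw [hschemeI Ks]; ring
  -- Step 2: expand hA.
  have e1 : ∑ K : ι, ν * v K * (dc * (∑ σ ∈ EΩ, ((if σ.1 = K then τ σ * (v K - v σ.2) else 0) +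
        (if σ.2 = K then τ σ * (v K - v σ.1) else 0))))
      = dc * ν * (∑ σ ∈ EΩ, τ σ * (v σ.1 - v σ.2) ^ 2) := by
    rw [← edge_sum_aux EΩ τ v, Finset.mul_sum]
    exact Finset.sum_congr rfl fun K _ => by ring
  have e2 : ∑ K : ι, ν * v K * (dc * (∑ Ks : κ, if nb Ks = K then τr Ks * (v K - vI Ks) else 0))
      = dc * ν * (∑ Ks : κ, v (nb Ks) * (τr Ks * (v (nb Ks) - vI Ks))) := by
    rw [← road_sum_aux nb (fun K Ks => τr Ks * (v K - vI Ks)) v, Finset.mul_sum]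
    exact Finset.sum_congr rfl fun K _ => by ring
  have e3 : ∑ Ks : κ, μ * u Ks * (Dc * (∑ σ ∈ Eω, ((if σ.1 = Ks then τs σ * (u Ks - u σ.2) else 0) +
        (if σ.2 = Ks then τs σ * (u Ks - u σ.1) else 0))))
      = Dc * μ * (∑ σ ∈ Eω, τs σ * (u σ.1 - u σ.2) ^ 2) := by
    rw [← edge_sum_aux Eω τs u, Finset.mul_sum]
    exact Finset.sum_congr rfl fun Ks _ => by ring
  have expandA : ∑ K : ι, ν * v K *
      (mK K * (v K - 0) / δt
        + dc * (∑ σ ∈ EΩ, ((if σ.1 = K then τ σ * (v K - v σ.2) else 0) +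
            (if σ.2 = K then τ σ * (v K - v σ.1) else 0)))
        + dc * (∑ Ks : κ, if nb Ks = K then τr Ks * (v K - vI Ks) else 0))
      = (∑ K : ι, (mK K / δt) * ν * v K ^ 2)
        + dc * ν * (∑ σ ∈ EΩ, τ σ * (v σ.1 - v σ.2) ^ 2)
        + dc * ν * (∑ Ks : κ, v (nb Ks) * (τr Ks * (v (nb Ks) - vI Ks))) := by
    have step : ∑ K : ι, ν * v K *
        (mK K * (v K - 0) / δt
          + dc * (∑ σ ∈ EΩ, ((if σ.1 = K then τ σ * (v K - v σ.2) else 0) +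
              (if σ.2 = K then τ σ * (v K - v σ.1) else 0)))
          + dc * (∑ Ks : κ, if nb Ks = K then τr Ks * (v K - vI Ks) else 0))
        = ∑ K : ι, ((mK K / δt) * ν * v K ^ 2
          + ν * v K * (dc * (∑ σ ∈ EΩ, ((if σ.1 = K then τ σ * (v K - v σ.2) else 0) +
              (if σ.2 = K then τ σ * (v K - v σ.1) else 0))))
          + ν * v K * (dc * (∑ Ks : κ, if nb Ks = K then τr Ks * (v K - vI Ks) else 0))) :=
      Finset.sum_congr rfl fun K _ => by ring
    rw [step, Finset.sum_add_distrib, Finset.sum_add_distrib, e1, e2]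
  have expandB : ∑ Ks : κ, μ * u Ks *
      (mKs Ks * (u Ks - 0) / δt
        + Dc * (∑ σ ∈ Eω, ((if σ.1 = Ks then τs σ * (u Ks - u σ.2) else 0) +
            (if σ.2 = Ks then τs σ * (u Ks - u σ.1) else 0)))
        + mKs Ks * (μ * u Ks - ν * vI Ks))
      = (∑ Ks : κ, (mKs Ks / δt) * μ * u Ks ^ 2)
        + Dc * μ * (∑ σ ∈ Eω, τs σ * (u σ.1 - u σ.2) ^ 2)
        + (∑ Ks : κ, μ * u Ks * (mKs Ks * (μ * u Ks - ν * vI Ks))) := by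
    have step : ∑ Ks : κ, μ * u Ks *
        (mKs Ks * (u Ks - 0) / δt
          + Dc * (∑ σ ∈ Eω, ((if σ.1 = Ks then τs σ * (u Ks - u σ.2) else 0) +
              (if σ.2 = Ks then τs σ * (u Ks - u σ.1) else 0)))
          + mKs Ks * (μ * u Ks - ν * vI Ks))
        = ∑ Ks : κ, ((mKs Ks / δt) * μ * u Ks ^ 2
          + μ * u Ks * (Dc * (∑ σ ∈ Eω, ((if σ.1 = Ks then τs σ * (u Ks - u σ.2) else 0) +
              (if σ.2 = Ks then τs σ * (u Ks - u σ.1) else 0))))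
          + μ * u Ks * (mKs Ks * (μ * u Ks - ν * vI Ks))) :=
      Finset.sum_congr rfl fun Ks _ => by ring
    rw [step, Finset.sum_add_distrib, Finset.sum_add_distrib, e3]
  -- Step 3: recombination over κ.
  have hκ : dc * ν * (∑ Ks : κ, τr Ks * (v (nb Ks) - vI Ks) ^ 2)
      + (∑ Ks : κ, mKs Ks * (μ * u Ks - ν * vI Ks) ^ 2)
      = dc * ν * (∑ Ks : κ, v (nb Ks) * (τr Ks * (v (nb Ks) - vI Ks)))
        + (∑ Ks : κ, μ * u Ks * (mKs Ks * (μ * u Ks - ν * vI Ks)))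
        + (∑ Ks : κ, ν * vI Ks *
            (-dc * (τr Ks * (v (nb Ks) - vI Ks)) - mKs Ks * (μ * u Ks - ν * vI Ks))) := by
    simp only [Finset.mul_sum, ← Finset.sum_add_distrib]
    exact Finset.sum_congr rfl fun Ks _ => by ring
  have hzero : (∑ K : ι, (mK K / δt) * ν * v K ^ 2) + (∑ Ks : κ, (mKs Ks / δt) * μ * u Ks ^ 2)
      + dc * ν * (∑ σ ∈ EΩ, τ σ * (v σ.1 - v σ.2) ^ 2)
      + dc * ν * (∑ Ks : κ, τr Ks * (v (nb Ks) - vI Ks) ^ 2)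
      + Dc * μ * (∑ σ ∈ Eω, τs σ * (u σ.1 - u σ.2) ^ 2)
      + (∑ Ks : κ, mKs Ks * (μ * u Ks - ν * vI Ks) ^ 2) = 0 := by
    rw [expandA] at hA
    rw [expandB] at hB
    linarith [hA, hB, hC, hκ]
  -- Step 4: nonnegativity of each summand forces them all to vanish.
  have nn1 : ∀ K : ι, (0:ℝ) ≤ (mK K / δt) * ν * v K ^ 2 := fun K =>
    mul_nonneg (mul_nonneg (div_nonneg (hmK K).le hδt.le) hν.le) (sq_nonneg _)
  have nn2 : ∀ Ks : κ, (0:ℝ) ≤ (mKs Ks / δt) * μ * u Ks ^ 2 := fun Ks =>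
    mul_nonneg (mul_nonneg (div_nonneg (hmKs Ks).le hδt.le) hμ.le) (sq_nonneg _)
  have s1 : (0:ℝ) ≤ ∑ K : ι, (mK K / δt) * ν * v K ^ 2 :=
    Finset.sum_nonneg fun K _ => nn1 K
  have s2 : (0:ℝ) ≤ ∑ Ks : κ, (mKs Ks / δt) * μ * u Ks ^ 2 :=
    Finset.sum_nonneg fun Ks _ => nn2 Ks
  have s3 : (0:ℝ) ≤ dc * ν * (∑ σ ∈ EΩ, τ σ * (v σ.1 - v σ.2) ^ 2) := by
    apply mul_nonneg (mul_nonneg hdc.le hν.le)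
    exact Finset.sum_nonneg fun σ hσ => mul_nonneg (hτ σ hσ).le (sq_nonneg _)
  have s4 : (0:ℝ) ≤ dc * ν * (∑ Ks : κ, τr Ks * (v (nb Ks) - vI Ks) ^ 2) := by
    apply mul_nonneg (mul_nonneg hdc.le hν.le)
    exact Finset.sum_nonneg fun Ks _ => mul_nonneg (hτr Ks).le (sq_nonneg _)
  have s5 : (0:ℝ) ≤ Dc * μ * (∑ σ ∈ Eω, τs σ * (u σ.1 - u σ.2) ^ 2) := by
    apply mul_nonneg (mul_nonneg hDc.le hμ.le)
    exact Finset.sum_nonneg fun σ hσ => mul_nonneg (hτs σ hσ).le (sq_nonneg _)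
  have s6 : (0:ℝ) ≤ ∑ Ks : κ, mKs Ks * (μ * u Ks - ν * vI Ks) ^ 2 :=
    Finset.sum_nonneg fun Ks _ => mul_nonneg (hmKs Ks).le (sq_nonneg _)
  have z1 : ∑ K : ι, (mK K / δt) * ν * v K ^ 2 = 0 := by linarith
  have z2 : ∑ Ks : κ, (mKs Ks / δt) * μ * u Ks ^ 2 = 0 := by linarith
  have hv : ∀ K, v K = 0 := by
    intro K
    have := (Finset.sum_eq_zero_iff_of_nonneg fun K _ => nn1 K).mp z1 K (Finset.mem_univ K)
    have hc : (0:ℝ) < (mK K / δt) * ν := mul_pos (div_pos (hmK K) hδt) hν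
    have := (mul_eq_zero.mp this).resolve_left hc.ne'
    exact pow_eq_zero_iff (two_ne_zero) |>.mp this
  have hu : ∀ Ks, u Ks = 0 := by
    intro Ks
    have := (Finset.sum_eq_zero_iff_of_nonneg fun Ks _ => nn2 Ks).mp z2 Ks (Finset.mem_univ Ks)
    have hc : (0:ℝ) < (mKs Ks / δt) * μ := mul_pos (div_pos (hmKs Ks) hδt) hμ
    have := (mul_eq_zero.mp this).resolve_left hc.ne'
    exact pow_eq_zero_iff (two_ne_zero) |>.mp this
  have hvI : ∀ Ks, vI Ks = 0 := by
    intro Ks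
    have h := hschemeI Ks
    rw [hv (nb Ks), hu Ks] at h
    have hc : (0:ℝ) < dc * τr Ks + mKs Ks * ν :=
      add_pos (mul_pos hdc (hτr Ks)) (mul_pos (hmKs Ks) hν)
    have hz : (dc * τr Ks + mKs Ks * ν) * vI Ks = 0 := by linear_combination h
    exact (mul_eq_zero.mp hz).resolve_left hc.ne'
  exact ⟨hzero, hv, hvI, hu⟩
end
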